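/- Let L be a finite graded lattice of rank n ≥ 1 with H̃_{n-2}(Δ(L̄); k) ≠ 0. Then L has at least n coatoms c (elements of rank n-1) satisfying H̃_{n-3}(Δ(0̂,c); k) ≠ 0 (for n = 1 interpret the condition vacuously, the single coatom being 0̂). -/

import Mathlib

set_option maxSynthPendingDepth 2

open Finset

variable {α : Type*}

/-- A `j`-vertex simplex of the order complex of `s ⊆ α`: a strictly increasing
`j`-tuple of elements of `s` (for `j = 0` this is the unique empty simplex). -/
def OrderedSimplex [Preorder α] (s : Set α) (j : ℕ) : Type _ :=
  {f : Fin j → α // StrictMono f ∧ ∀ i, f i ∈ s}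

/-- The module of simplicial chains with `j` vertices (i.e. of degree `j - 1`)
of the order complex of `s`, with coefficients in `K`.  Since degree `j = 0`
corresponds to the empty simplex, this is the *augmented* chain complex. -/
abbrev SimpChains (K : Type*) [CommRing K] [Preorder α] (s : Set α) (j : ℕ) :=
  OrderedSimplex s j →₀ K

/-- The `i`-th face of a simplex (delete the `i`-th vertex). -/
def OrderedSimplex.face [Preorder α] {s : Set α} {j : ℕ}
    (σ : OrderedSimplex s (j + 1)) (i : Fin (j + 1)) : OrderedSimplex s j :=
  ⟨σ.1 ∘ Fin.succAbove i, σ.2.1.comp (Fin.strictMono_succAbove i), fun _ => σ.2.2 _⟩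

/-- The simplicial boundary map (for `j = 0` it is the augmentation). -/
noncomputable def simpBoundary (K : Type*) [CommRing K] [Preorder α] (s : Set α) (j : ℕ) :
    SimpChains K s (j + 1) →ₗ[K] SimpChains K s j :=
  Finsupp.lsum K fun σ => ∑ i : Fin (j + 1), ((-1 : K) ^ (i : ℕ)) • Finsupp.lsingle (σ.face i)

/-- Cycles with `j` vertices (for `j = 0` every chain is a cycle). -/
noncomputable def simpCycles (K : Type*) [CommRing K] [Preorder α] (s : Set α) :
    (j : ℕ) → Submodule K (SimpChains K s j)
  | 0 => ⊤
  | (i + 1) => LinearMap.ker (simpBoundary K s i)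

/-- Boundaries with `j` vertices. -/
noncomputable def simpBoundaries (K : Type*) [CommRing K] [Preorder α] (s : Set α) (j : ℕ) :
    Submodule K (SimpChains K s j) :=
  LinearMap.range (simpBoundary K s j)

/-- `ReducedHomology K s j` is the reduced simplicial homology group
`H̃_{j-1}(Δ(s); K)` of the order complex of `s` (the index `j` counts vertices,
so `j = 0` gives `H̃₋₁` and `j = n - 1` gives `H̃_{n-2}`). -/
noncomputable def ReducedHomology (K : Type*) [CommRing K] [Preorder α] (s : Set α) (j : ℕ) :=
  ↥(simpCycles K s j) ⧸ (simpBoundaries K s j).comap (simpCycles K s j).subtype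

noncomputable instance (K : Type*) [CommRing K] [Preorder α] (s : Set α) (j : ℕ) :
    AddCommGroup (ReducedHomology K s j) := by unfold ReducedHomology; infer_instance

noncomputable instance (K : Type*) [CommRing K] [Preorder α] (s : Set α) (j : ℕ) :
    Module K (ReducedHomology K s j) := by unfold ReducedHomology; infer_instance

/-- The proper part `L ∖ {⊥, ⊤}` of a bounded poset. -/
def properPart (α : Type*) [Preorder α] [BoundedOrder α] : Set α :=
  {x | x ≠ ⊥ ∧ x ≠ ⊤}

/-- The flag `f`-vector entry `f_P(S)`: the number of chains in the proper part
of `P` whose set of ranks is exactly `S`. -/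
noncomputable def flagf (α : Type*) [Preorder α] [BoundedOrder α] [GradeMinOrder ℕ α]
    (S : Finset ℕ) : ℕ :=
  Nat.card {C : Finset α // IsChain (· ≤ ·) (C : Set α) ∧ (↑C ⊆ properPart α) ∧
    C.image (grade ℕ) = S}

/-- The multinomial coefficient `α_n(S) = n! / (s₁!·(s₂-s₁)!⋯(n-s_l)!)`
for `S = {s₁ < s₂ < ⋯ < s_l} ⊆ [n-1]`; it equals `f_{B_n}(S)`. -/
def alphaMulti (n : ℕ) (S : Finset ℕ) : ℕ :=
  n.factorial /
    ((S.sort (· ≤ ·) ++ [n]).zipWith (fun b a => (b - a).factorial)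
      (0 :: S.sort (· ≤ ·))).prod

/-- An element `x` of a graded bounded poset is *good* if `x = ⊥` or the order
complex of the open interval `(⊥, x)` has nontrivial top reduced homology
`H̃_{ρ(x)-2}` over `K`. -/
def IsGoodElement (K : Type*) [CommRing K] [Preorder α] [OrderBot α] [GradeMinOrder ℕ α]
    (x : α) : Prop :=
  x = ⊥ ∨ Nontrivial (ReducedHomology K (Set.Ioo (⊥ : α) x) (grade ℕ x - 1))

/-!
A nonzero top-dimensional cycle `z` of `Δ(⊥, u)`, with `u` of rank `j + 1`, is a combination of
maximal chains. For a vertex `c` that is the top of a chain in its support, the chains of `z`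
ending at `c`, with `c` deleted, form a nonzero top-dimensional cycle of `Δ(⊥, c)`; so `c` is
good. To count these tops by induction on `j`, fix one of them, `c₁`, and its restricted cycle
`w`. For every top `t` of `w`, pick a chain `τ` of `w` ending at `t`: the cycle condition of `z`
at `τ` forces a second chain of `z` through `τ`, whose top `c ≠ c₁` has the same rank, so
`t = c ⊓ c₁`. Distinct `t` thus come from distinct `c`, and `z` has at least `j + 1` tops.
-/

namespace OrderedSimplex

section Preorder

variable [Preorder α] {s t : Set α} {j : ℕ}

def inclusion (h : s ⊆ t) (σ : OrderedSimplex s j) : OrderedSimplex t j :=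
  ⟨σ.1, σ.2.1, fun i => h (σ.2.2 i)⟩

lemma inclusion_injective (h : s ⊆ t) : Function.Injective (inclusion (j := j) h) :=
  fun _ _ hστ => Subtype.ext (congrArg Subtype.val hστ :)

variable [OrderBot α]

/-- The empty simplex has top `⊥`, the only coatom of a lattice of rank one. -/
def top : {j : ℕ} → OrderedSimplex s j → α
  | 0, _ => ⊥
  | j + 1, σ => σ.1 (Fin.last j)

lemma top_mem (σ : OrderedSimplex s (j + 1)) : σ.top ∈ s :=
  σ.2.2 _

@[simp] lemma top_inclusion (h : s ⊆ t) (σ : OrderedSimplex s j) :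
    (inclusion h σ).top = σ.top := by
  cases j <;> rfl

lemma top_face_of_ne_last (σ : OrderedSimplex s (j + 1)) {i : Fin (j + 1)}
    (hi : i ≠ Fin.last j) : (σ.face i).top = σ.top := by
  cases j with
  | zero => exact absurd (Subsingleton.elim (α := Fin 1) _ _) hi
  | succ j => exact congrArg σ.1 (Fin.succAbove_ne_last_last hi)

variable {u c : α}

lemma top_face_last_lt (σ : OrderedSimplex (Set.Ioo ⊥ u) (j + 1)) :
    (σ.face (Fin.last j)).top < σ.top := by
  cases j with
  | zero => exact σ.top_mem.1
  | succ j =>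
    show σ.1 ((Fin.last (j + 1)).succAbove (Fin.last j)) < σ.1 (Fin.last (j + 1))
    rw [Fin.succAbove_last]
    exact σ.2.1 (Fin.castSucc_lt_last _)

def snoc (hc : c ∈ Set.Ioo ⊥ u) (τ : OrderedSimplex (Set.Ioo ⊥ c) j) :
    OrderedSimplex (Set.Ioo ⊥ u) (j + 1) :=
  ⟨Fin.snoc τ.1 c, by
    rw [← Fin.insertNth_last', Fin.strictMono_insertNth_iff]
    exact ⟨τ.2.1, fun i _ => (τ.2.2 i).2,
      fun i hi => absurd hi (not_le.2 (Fin.castSucc_lt_last i))⟩,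
   Fin.lastCases (by simpa using hc) fun i => by
    simpa using Set.Ioo_subset_Ioo_right hc.2.le (τ.2.2 i)⟩

variable (hc : c ∈ Set.Ioo ⊥ u)

lemma snoc_injective : Function.Injective (snoc (j := j) hc) := fun τ τ' h =>
  Subtype.ext <| funext fun i => by
    simpa [snoc] using congrArg (fun σ : OrderedSimplex _ _ => σ.1 i.castSucc) h

@[simp] lemma top_snoc (τ : OrderedSimplex (Set.Ioo ⊥ c) j) : (snoc hc τ).top = c := by
  simp [snoc, top]

lemma face_last_snoc (τ : OrderedSimplex (Set.Ioo ⊥ c) j) :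
    (snoc hc τ).face (Fin.last j) = inclusion (Set.Ioo_subset_Ioo_right hc.2.le) τ :=
  Subtype.ext <| funext fun k => by simp [face, snoc, inclusion]

lemma face_castSucc_snoc (τ : OrderedSimplex (Set.Ioo ⊥ c) (j + 1)) (i : Fin (j + 1)) :
    (snoc hc τ).face i.castSucc = snoc hc (τ.face i) :=
  Subtype.ext <| funext fun k => by
    induction k using Fin.lastCases with
    | last =>
      simp [face, snoc, Fin.succAbove_of_le_castSucc _ _ (Fin.castSucc_le_castSucc_iff.2
        (Fin.le_last i)), Fin.succ_last]
    | cast k => simp [face, snoc, Fin.castSucc_succAbove_castSucc]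

lemma exists_eq_snoc {σ : OrderedSimplex (Set.Ioo ⊥ u) (j + 1)} (h : σ.top = c) :
    ∃ τ, σ = snoc hc τ := by
  subst h
  exact ⟨⟨Fin.init σ.1, σ.2.1.comp Fin.strictMono_castSucc,
    fun i => ⟨(σ.2.2 _).1, σ.2.1 (Fin.castSucc_lt_last i)⟩⟩,
    Subtype.ext (Fin.snoc_init_self σ.1).symm⟩

lemma eq_snoc_of_face_last_eq {σ : OrderedSimplex (Set.Ioo ⊥ u) (j + 1)}
    {τ : OrderedSimplex (Set.Ioo ⊥ c) j} (htop : σ.top = c)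
    (hface : σ.face (Fin.last j) = inclusion (Set.Ioo_subset_Ioo_right hc.2.le) τ) :
    σ = snoc hc τ := by
  obtain ⟨τ₀, rfl⟩ := exists_eq_snoc hc htop
  rw [face_last_snoc] at hface
  rw [inclusion_injective _ hface]

end Preorder

end OrderedSimplex

open OrderedSimplex

section Chains

variable {K : Type*} [CommRing K] [Preorder α] {s : Set α} {j : ℕ}

lemma mem_simpCycles_succ {z : SimpChains K s (j + 1)} :
    z ∈ simpCycles K s (j + 1) ↔ simpBoundary K s j z = 0 :=
  Iff.rfl

lemma simpBoundary_single (σ : OrderedSimplex s (j + 1)) (b : K) :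
    simpBoundary K s j (Finsupp.single σ b) =
      ∑ i : Fin (j + 1), (-1 : K) ^ (i : ℕ) • Finsupp.single (σ.face i) b := by
  simp [simpBoundary]

open scoped Classical in
lemma simpBoundary_apply (z : SimpChains K s (j + 1)) (τ : OrderedSimplex s j) :
    simpBoundary K s j z τ =
      ∑ σ ∈ z.support, ∑ i : Fin (j + 1),
        if σ.face i = τ then (-1 : K) ^ (i : ℕ) * z σ else 0 := by
  conv_lhs => rw [← z.sum_single]
  simp only [Finsupp.sum, map_sum, simpBoundary_single, Finsupp.finsetSum_apply,
    Finsupp.smul_apply, Finsupp.single_apply, smul_eq_mul, mul_ite, mul_zero]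

lemma exists_mem_simpCycles_ne_zero [Nontrivial (ReducedHomology K s j)] :
    ∃ z ∈ simpCycles K s j, z ≠ 0 := by
  obtain ⟨q, hq⟩ := exists_ne (0 : ReducedHomology K s j)
  obtain ⟨z, rfl⟩ := Submodule.Quotient.mk_surjective _ q
  exact ⟨z.1, z.2, fun h => hq (by rw [show z = 0 from Subtype.ext h]; rfl)⟩

lemma nontrivial_reducedHomology_of_mem_simpCycles [IsEmpty (OrderedSimplex s (j + 1))]
    {z : SimpChains K s j} (hz : z ∈ simpCycles K s j) (hz0 : z ≠ 0) :
    Nontrivial (ReducedHomology K s j) := by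
  show Nontrivial (simpCycles K s j ⧸ (simpBoundaries K s j).comap (simpCycles K s j).subtype)
  refine nontrivial_of_ne (Submodule.Quotient.mk ⟨z, hz⟩) 0 fun h => ?_
  rw [Submodule.Quotient.mk_eq_zero, Submodule.mem_comap] at h
  obtain ⟨y, hy⟩ := h
  exact hz0 (hy.symm.trans (by rw [Subsingleton.elim y 0, map_zero]))

variable [OrderBot α]

lemma exists_ne_face_last_eq {z : SimpChains K s (j + 1)} (hz : simpBoundary K s j z = 0)
    {σ₁ : OrderedSimplex s (j + 1)} (hσ₁ : σ₁ ∈ z.support)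
    (htop : ∀ σ ∈ z.support, σ.top ≠ (σ₁.face (Fin.last j)).top) :
    ∃ σ ∈ z.support, σ ≠ σ₁ ∧ σ.face (Fin.last j) = σ₁.face (Fin.last j) := by
  classical
  set τ := σ₁.face (Fin.last j)
  have hlast : ∀ σ ∈ z.support, ∀ i, σ.face i = τ → i = Fin.last j := fun σ hσ i hi =>
    by_contra fun hne => htop σ hσ (by rw [← top_face_of_ne_last σ hne, hi])
  by_contra! hτ
  have hcoeff : simpBoundary K s j z τ = (-1) ^ j * z σ₁ := by
    rw [simpBoundary_apply, Finset.sum_eq_single_of_mem σ₁ hσ₁,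
      Fintype.sum_eq_single (Fin.last j)]
    · simp [τ]
    · exact fun i hi => if_neg (mt (hlast σ₁ hσ₁ i) hi)
    · exact fun σ hσ hne => Finset.sum_eq_zero fun i _ =>
        if_neg fun h => hτ σ hσ hne (hlast σ hσ i h ▸ h)
  rw [hz, Finsupp.coe_zero, Pi.zero_apply, eq_comm, neg_one_pow_mul_eq_zero_iff] at hcoeff
  exact Finsupp.mem_support_iff.1 hσ₁ hcoeff

end Chains

section RestrictTop

variable (K : Type*) [CommRing K] [Preorder α] [OrderBot α] {u c : α} {j : ℕ}

noncomputable def restrictTop (hc : c ∈ Set.Ioo ⊥ u) :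
    SimpChains K (Set.Ioo ⊥ u) (j + 1) →ₗ[K] SimpChains K (Set.Ioo ⊥ c) j :=
  Finsupp.lcomapDomain (snoc hc) (snoc_injective hc)

variable {K} (hc : c ∈ Set.Ioo ⊥ u)

@[simp] lemma restrictTop_apply (z : SimpChains K (Set.Ioo ⊥ u) (j + 1))
    (τ : OrderedSimplex (Set.Ioo ⊥ c) j) : restrictTop K hc z τ = z (snoc hc τ) :=
  rfl

lemma restrictTop_single_snoc (τ : OrderedSimplex (Set.Ioo ⊥ c) j) (b : K) :
    restrictTop K hc (Finsupp.single (snoc hc τ) b) = Finsupp.single τ b :=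
  Finsupp.comapDomain_single _ _ _ _

lemma restrictTop_single_of_top_ne {σ : OrderedSimplex (Set.Ioo ⊥ u) (j + 1)} (h : σ.top ≠ c)
    (b : K) : restrictTop K hc (Finsupp.single σ b) = 0 :=
  Finsupp.comapDomain_single_of_not_mem_range (by rintro ⟨τ, rfl⟩; simp at h) _ _

/-- For `c ⋖ u`, no simplex of `(⊥, u)` has `c` as its second highest vertex. -/
lemma restrictTop_comp_simpBoundary (hcu : c ⋖ u) :
    restrictTop K hc ∘ₗ simpBoundary K (Set.Ioo ⊥ u) (j + 1) =
      simpBoundary K (Set.Ioo ⊥ c) j ∘ₗ restrictTop K hc := by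
  refine Finsupp.lhom_ext fun σ b => ?_
  simp only [LinearMap.comp_apply, simpBoundary_single, map_sum, map_smul]
  by_cases hσ : σ.top = c
  · obtain ⟨τ, rfl⟩ := exists_eq_snoc hc hσ
    have hlast : (inclusion (Set.Ioo_subset_Ioo_right hc.2.le) τ).top ≠ c := by
      simpa using (τ.top_mem).2.ne
    simp [Fin.sum_univ_castSucc, face_castSucc_snoc, restrictTop_single_snoc, face_last_snoc,
      restrictTop_single_of_top_ne hc hlast, simpBoundary_single]
  · rw [restrictTop_single_of_top_ne hc hσ, map_zero]
    refine Finset.sum_eq_zero fun i _ => ?_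
    rw [restrictTop_single_of_top_ne hc ?_, smul_zero]
    obtain rfl | hi := eq_or_ne i (Fin.last _)
    · exact fun h => hcu.2 (h ▸ top_face_last_lt σ) σ.top_mem.2
    · rwa [top_face_of_ne_last σ hi]

lemma restrictTop_mem_simpCycles (hcu : c ⋖ u) {z : SimpChains K (Set.Ioo ⊥ u) (j + 1)}
    (hz : z ∈ simpCycles K _ (j + 1)) : restrictTop K hc z ∈ simpCycles K _ j := by
  cases j with
  | zero => exact Submodule.mem_top
  | succ j =>
    rw [mem_simpCycles_succ] at hz ⊢
    rw [← LinearMap.comp_apply, ← restrictTop_comp_simpBoundary hc hcu, LinearMap.comp_apply,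
      hz, map_zero]

lemma restrictTop_ne_zero {z : SimpChains K (Set.Ioo ⊥ u) (j + 1)}
    {σ : OrderedSimplex (Set.Ioo ⊥ u) (j + 1)} (hσ : σ ∈ z.support) :
    restrictTop K σ.top_mem z ≠ 0 := by
  obtain ⟨τ, hτ⟩ := exists_eq_snoc σ.top_mem rfl
  exact Finsupp.ne_iff.2 ⟨τ, by rwa [restrictTop_apply, ← hτ, Finsupp.coe_zero, Pi.zero_apply,
    ← Finsupp.mem_support_iff]⟩

end RestrictTop

lemma properPart_eq_Ioo [PartialOrder α] [BoundedOrder α] : properPart α = Set.Ioo ⊥ ⊤ := by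
  ext x
  simp [properPart, bot_lt_iff_ne_bot, lt_top_iff_ne_top]

lemma eq_inf_of_grade_eq_add_one [Lattice α] [GradeOrder ℕ α] {a b t : α} (hab : a ≠ b)
    (ha : grade ℕ a = grade ℕ t + 1) (hb : grade ℕ b = grade ℕ t + 1) (hta : t ≤ a)
    (htb : t ≤ b) : t = a ⊓ b := by
  have hlt : a ⊓ b < a := inf_le_left.lt_of_ne fun h =>
    hab ((inf_eq_left.1 h).eq_of_not_lt fun h' => (grade_strictMono h').ne (ha.trans hb.symm))
  refine (le_inf hta htb).eq_of_not_lt fun h' => ?_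
  have := grade_strictMono (𝕆 := ℕ) h'
  have := grade_strictMono (𝕆 := ℕ) hlt
  omega

namespace OrderedSimplex

variable [Preorder α] [OrderBot α] {u : α} {j : ℕ}

lemma le_grade_top [GradeOrder ℕ α] (σ : OrderedSimplex (Set.Ioo ⊥ u) j) :
    j ≤ grade ℕ σ.top := by
  induction j with
  | zero => exact Nat.zero_le _
  | succ j ih => exact (ih (σ.face (Fin.last j))).trans_lt (grade_strictMono (top_face_last_lt σ))

lemma isEmpty_of_grade_le [GradeOrder ℕ α] (hu : grade ℕ u ≤ j + 1) :
    IsEmpty (OrderedSimplex (Set.Ioo ⊥ u) (j + 1)) :=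
  ⟨fun σ => by
    have := grade_strictMono (𝕆 := ℕ) σ.top_mem.2
    have := σ.le_grade_top
    omega⟩

variable [GradeMinOrder ℕ α]

lemma grade_top (σ : OrderedSimplex (Set.Ioo ⊥ u) j) (hu : grade ℕ u = j + 1) :
    grade ℕ σ.top = j := by
  refine le_antisymm ?_ σ.le_grade_top
  cases j with
  | zero => simp [top, grade_bot]
  | succ j =>
    have := grade_strictMono (𝕆 := ℕ) σ.top_mem.2
    omega

lemma top_covBy (σ : OrderedSimplex (Set.Ioo ⊥ u) (j + 1)) (hu : grade ℕ u = j + 2) :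
    σ.top ⋖ u :=
  covBy_iff_lt_covBy_grade.2
    ⟨σ.top_mem.2, by rw [σ.grade_top hu, hu]; exact Order.covBy_add_one _⟩

end OrderedSimplex

section TopVertices

variable {K : Type*} [CommRing K] [DecidableEq α]

def topVertices [Preorder α] [OrderBot α] {s : Set α} {j : ℕ} (z : SimpChains K s j) :
    Finset α :=
  z.support.image OrderedSimplex.top

lemma mem_topVertices [Preorder α] [OrderBot α] {s : Set α} {j : ℕ} {z : SimpChains K s j}
    {c : α} : c ∈ topVertices z ↔ ∃ σ ∈ z.support, σ.top = c :=
  Finset.mem_image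

lemma isGoodElement_of_mem_topVertices [Preorder α] [OrderBot α] [GradeMinOrder ℕ α] {u : α}
    {j : ℕ} (hu : grade ℕ u = j + 1) {z : SimpChains K (Set.Ioo ⊥ u) j}
    (hz : z ∈ simpCycles K _ j) {c : α} (hc : c ∈ topVertices z) : IsGoodElement K c := by
  obtain ⟨σ, hσ, rfl⟩ := mem_topVertices.1 hc
  cases j with
  | zero => exact Or.inl rfl
  | succ j =>
    have hgc : grade ℕ σ.top = j + 1 := σ.grade_top hu
    have := isEmpty_of_grade_le hgc.le
    refine Or.inr ?_
    rw [hgc, Nat.add_sub_cancel]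
    exact nontrivial_reducedHomology_of_mem_simpCycles
      (restrictTop_mem_simpCycles σ.top_mem (σ.top_covBy hu) hz) (restrictTop_ne_zero hσ)

variable [Lattice α] [OrderBot α] [GradeMinOrder ℕ α] {u : α} {j : ℕ}

lemma topVertices_restrictTop_subset (hu : grade ℕ u = j + 2)
    {z : SimpChains K (Set.Ioo ⊥ u) (j + 1)} (hz : z ∈ simpCycles K _ (j + 1)) {c₁ : α}
    (hc₁ : c₁ ∈ Set.Ioo ⊥ u) (hgc₁ : grade ℕ c₁ = j + 1) :
    topVertices (restrictTop K hc₁ z) ⊆ ((topVertices z).erase c₁).image (· ⊓ c₁) := by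
  intro t ht
  obtain ⟨τ, hτ, rfl⟩ := mem_topVertices.1 ht
  have hσ₁ : snoc hc₁ τ ∈ z.support := by simpa using hτ
  have hgt : grade ℕ τ.top = j := τ.grade_top hgc₁
  obtain ⟨σ, hσ, hne, hface⟩ := exists_ne_face_last_eq hz hσ₁ fun σ _ h => by
    rw [face_last_snoc, top_inclusion] at h
    have := σ.grade_top hu
    rw [h, hgt] at this
    omega
  rw [face_last_snoc] at hface
  have hc : σ.top ≠ c₁ := fun h => hne (eq_snoc_of_face_last_eq hc₁ h hface)
  have hlt : τ.top < σ.top := by simpa [hface] using top_face_last_lt σ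
  have hlt₁ : τ.top < c₁ := by simpa [face_last_snoc] using top_face_last_lt (snoc hc₁ τ)
  refine mem_image.2 ⟨σ.top, mem_erase.2 ⟨hc, mem_topVertices.2 ⟨σ, hσ, rfl⟩⟩, ?_⟩
  exact (eq_inf_of_grade_eq_add_one hc (by rw [σ.grade_top hu, hgt]) (by rw [hgc₁, hgt])
    hlt.le hlt₁.le).symm

theorem le_card_topVertices (hu : grade ℕ u = j + 1) {z : SimpChains K (Set.Ioo ⊥ u) j}
    (hz : z ∈ simpCycles K _ j) (hz0 : z ≠ 0) : j + 1 ≤ #(topVertices z) := by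
  induction j generalizing u with
  | zero => exact ((Finsupp.support_nonempty_iff.2 hz0).image _).card_pos
  | succ j ih =>
    obtain ⟨σ, hσ⟩ := Finsupp.support_nonempty_iff.2 hz0
    have hgc : grade ℕ σ.top = j + 1 := σ.grade_top hu
    have hmem : σ.top ∈ topVertices z := mem_topVertices.2 ⟨σ, hσ, rfl⟩
    calc j + 1 + 1
        ≤ #(topVertices (restrictTop K σ.top_mem z)) + 1 := by
          gcongr
          exact ih hgc (restrictTop_mem_simpCycles σ.top_mem (σ.top_covBy hu) hz)
            (restrictTop_ne_zero hσ)
      _ ≤ #(((topVertices z).erase σ.top).image (· ⊓ σ.top)) + 1 := by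
          gcongr
          exact topVertices_restrictTop_subset hu hz σ.top_mem hgc
      _ ≤ #((topVertices z).erase σ.top) + 1 := by grw [card_image_le]
      _ = #(topVertices z) := card_erase_add_one hmem

end TopVertices

theorem good_coatoms_count_general
    (n : ℕ)
    (α : Type*) [Lattice α] [BoundedOrder α] [Fintype α] [GradeMinOrder ℕ α]
    (hrank : grade ℕ (⊤ : α) = n)
    (K : Type*) [Field K]
    (hH : Nontrivial (ReducedHomology K (properPart α) (n - 1))) :
    n ≤ Nat.card {c : α // grade ℕ c = n - 1 ∧
        (c = ⊥ ∨ Nontrivial (ReducedHomology K (Set.Ioo (⊥ : α) c) (n - 2)))} := by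
  classical
  rcases n with _ | j
  · exact Nat.zero_le _
  rw [Nat.add_sub_cancel, properPart_eq_Ioo] at hH
  obtain ⟨z, hz, hz0⟩ :=
    exists_mem_simpCycles_ne_zero (K := K) (s := Set.Ioo (⊥ : α) ⊤) (j := j)
  have hgood : ∀ c ∈ topVertices z, grade ℕ c = j + 1 - 1 ∧
      (c = ⊥ ∨ Nontrivial (ReducedHomology K (Set.Ioo (⊥ : α) c) (j + 1 - 2))) := by
    intro c hc
    obtain ⟨σ, -, rfl⟩ := mem_topVertices.1 hc
    have hgc : grade ℕ σ.top = j := σ.grade_top hrank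
    have := isGoodElement_of_mem_topVertices hrank hz hc
    rw [IsGoodElement, hgc] at this
    exact ⟨hgc, by simpa [show j + 1 - 2 = j - 1 by omega] using this⟩
  calc j + 1 ≤ #(topVertices z) := le_card_topVertices hrank hz hz0
    _ = Nat.card (topVertices z) := (Nat.card_eq_finsetCard _).symm
    _ ≤ _ := Nat.card_mono (Set.toFinite _) hgood

/-- **Step 3.**  A finite graded lattice `L` of rank `n ≥ 1` with
`H̃_{n-2}(Δ(L̄); K) ≠ 0` has at least `n` good coatoms, i.e. elements `c` of rank
`n - 1` with `H̃_{n-3}(Δ(⊥,c); K) ≠ 0` (for `n = 1` the single coatom `⊥` counts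
vacuously). -/
theorem good_coatoms_count
    (n : ℕ) (hn : 1 ≤ n)
    (α : Type*) [Lattice α] [BoundedOrder α] [Fintype α] [GradeMinOrder ℕ α]
    (hrank : grade ℕ (⊤ : α) = n)
    (K : Type*) [Field K]
    (hH : Nontrivial (ReducedHomology K (properPart α) (n - 1))) :
    n ≤ Nat.card {c : α // grade ℕ c = n - 1 ∧
        (c = ⊥ ∨ Nontrivial (ReducedHomology K (Set.Ioo (⊥ : α) c) (n - 2)))} :=
  good_coatoms_count_general n α hrank K hH
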